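/- Let h ∈ ℕ and δ ∈ (0,1) with h > 8·ln(4/δ), and let B ~ Binomial(h, 1/2). Then for every integer k with k > h/2 − √((h/2)·ln(4/δ)), one has Pr[B = k+1] ≤ (1 + √(32·ln(4/δ)/h)) · Pr[B = k]. -/

import Mathlib

open scoped ENNReal Classical

noncomputable section

namespace ShuffledDP

universe u v w

lemma half_le_one : (2⁻¹ : ℝ≥0∞) ≤ 1 := by
  simp [ENNReal.inv_le_one]

/-- Independent samples from a finite family of PMFs, collected (in order) as a list. -/
noncomputable def indep {α : Type u} : (n : ℕ) → (Fin n → PMF α) → PMF (List α)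
  | 0, _ => PMF.pure []
  | n + 1, f =>
      (f 0).bind fun y => (indep n fun i => f i.succ).bind fun ys => PMF.pure (y :: ys)

/-- `(ε, δ)`-differential privacy of a mechanism `M` with respect to a
neighboring relation `nbr` on inputs. -/
def DPFor {I : Type u} {Z : Type v} (nbr : I → I → Prop) (M : I → PMF Z) (ε δ : ℝ) : Prop :=
  ∀ x x', nbr x x' → ∀ T : Set Z,
    (M x).toOuterMeasure T ≤
      ENNReal.ofReal (Real.exp ε) * (M x').toOuterMeasure T + ENNReal.ofReal δ

/-- Two datasets are neighbors if they differ in at most one coordinate. -/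
def Neighbor {n : ℕ} {X : Type u} (x x' : Fin n → X) : Prop :=
  ∃ j, ∀ i, i ≠ j → x i = x' i

/-- The randomized-response local randomizer `R_{n,λ}`: output the input bit with
probability `1 - λ/n` and a uniformly random bit with probability `λ/n`. -/
noncomputable def rr (n : ℕ) (lam : ℝ) (x : Bool) : PMF Bool :=
  (PMF.bernoulli (min (ENNReal.ofReal (lam / n)) 1).toNNReal (by simpa using ENNReal.toNNReal_mono ENNReal.one_ne_top (min_le_right _ _))).bind fun b =>
    if b then PMF.bernoulli (2⁻¹ : ℝ≥0∞).toNNReal (by simpa using ENNReal.toNNReal_mono ENNReal.one_ne_top half_le_one) else PMF.pure x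

/-- Binomial distribution, valued in `ℕ`. -/
noncomputable def binom (p : ℝ≥0∞) (h : p ≤ 1) (m : ℕ) : PMF ℕ :=
  (PMF.binomial p.toNNReal (by simpa using ENNReal.toNNReal_mono ENNReal.one_ne_top h) m).map Fin.val

/-- Uniform distribution over the subsets of `Fin n` of size `s`. -/
noncomputable def uniformSubset (n s : ℕ) : PMF (Finset (Fin n)) :=
  if h : ((Finset.univ : Finset (Fin n)).powersetCard s).Nonempty then
    PMF.uniformOfFinset _ h
  else PMF.pure ∅

/-- `∑_{i ∉ H} x_i` for a boolean dataset `x`. -/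
def sumOutside {n : ℕ} (H : Finset (Fin n)) (x : Fin n → Bool) : ℕ :=
  ∑ i ∈ Hᶜ, (if x i then 1 else 0)

/-- The mechanism `C_H`: output `∑_{i ∉ H} x_i + B` with `B ~ Bin(|H|, 1/2)`. -/
noncomputable def CH (n : ℕ) (H : Finset (Fin n)) (x : Fin n → Bool) : PMF ℕ :=
  (binom 2⁻¹ half_le_one H.card).map fun B => sumOutside H x + B

/-- The mechanism `C_s`: sample `H` uniformly among size-`s` subsets, then run `C_H`. -/
noncomputable def Cs (n s : ℕ) (x : Fin n → Bool) : PMF ℕ :=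
  (uniformSubset n s).bind fun H => CH n H x

/-- The mechanism `C_λ`: sample `s ~ Bin(n, λ/n)`, then run `C_s`. -/
noncomputable def Cmech (n : ℕ) (lam : ℝ) (x : Fin n → Bool) : PMF ℕ :=
  (binom (min (ENNReal.ofReal (lam / n)) 1) (min_le_right _ _) n).bind fun s => Cs n s x

/-- The shuffled bit-sum mechanism `Π_{n,λ}`: the random multiset `{y_1, …, y_n}`
of the outputs `y_i ~ R_{n,λ}(x_i)`. -/
noncomputable def shuffleBit (n : ℕ) (lam : ℝ) (x : Fin n → Bool) : PMF (Multiset Bool) :=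
  (indep n fun i => rr n lam (x i)).map fun l => (l : Multiset Bool)

/-- The bit-sum protocol output `P_{n,λ}(x) = (n/(n-λ)) (∑ y_i - λ/2)`. -/
noncomputable def bitSumOutput (n : ℕ) (lam : ℝ) (x : Fin n → Bool) : PMF ℝ :=
  (indep n fun i => rr n lam (x i)).map fun l =>
    ((n : ℝ) / (n - lam)) * ((l.count true : ℝ) - lam / 2)

/-- The randomized-rounding encoder `E_r`. -/
noncomputable def encoder (r : ℕ) (x : ℝ) : PMF (Fin r → Bool) :=
  (PMF.bernoulli (min (ENNReal.ofReal (x * r - ⌈x * r⌉ + 1)) 1).toNNReal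
      (by simpa using ENNReal.toNNReal_mono ENNReal.one_ne_top (min_le_right _ _))).map
    fun b i => if ((i : ℕ) : ℤ) + 1 < ⌈x * r⌉ then true
      else if ((i : ℕ) : ℤ) + 1 = ⌈x * r⌉ then b else false

/-- The real-sum shuffled mechanism `Π^ℝ_{n,λ,r}`: the random multiset of all `n·r`
bits `y_{i,j} ~ R_{n,λ}(b_{i,j})` where `(b_{i,1},…,b_{i,r}) = E_r(x_i)`. -/
noncomputable def realShuffle (n : ℕ) (lam : ℝ) (r : ℕ) (X : Fin n → ℝ) :
    PMF (Multiset Bool) :=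
  (indep n fun i =>
      (encoder r (X i)).bind fun b =>
        (indep r fun j => rr n lam (b j)).map fun l => (l : Multiset Bool)).map
    fun ms => ms.sum

/-- The real-sum protocol output `z = (1/r)(n/(n-λ)) (∑_{i,j} y_{i,j} - λ r/2)`. -/
noncomputable def realOutput (n : ℕ) (lam : ℝ) (r : ℕ) (X : Fin n → ℝ) : PMF ℝ :=
  (realShuffle n lam r X).map fun m =>
    (1 / (r : ℝ)) * ((n : ℝ) / (n - lam)) * ((m.count true : ℝ) - lam * r / 2)

/-- The shuffled mechanism associated with a randomizer producing a multiset of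
messages: the union (multiset sum) of the `n` users' message multisets. -/
noncomputable def shuffM {𝒳 : Type u} {𝒴 : Type v} (n : ℕ) (R : 𝒳 → PMF (Multiset 𝒴))
    (x : Fin n → 𝒳) : PMF (Multiset 𝒴) :=
  (indep n fun i => R (x i)).map fun l => l.sum

/-- The multiset of the `m` messages output by an `m`-message randomizer. -/
noncomputable def vecR {𝒳 : Type u} {𝒴 : Type v} {m : ℕ} (R : 𝒳 → PMF (Fin m → 𝒴)) :
    𝒳 → PMF (Multiset 𝒴) :=
  fun a => (R a).map fun v => ((List.ofFn v : List 𝒴) : Multiset 𝒴)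

/-- The one-message shuffled mechanism `Π_R`: the random multiset `{R(x_1), …, R(x_n)}`. -/
noncomputable def shuffle1 {𝒳 : Type u} {𝒴 : Type v} (n : ℕ) (R : 𝒳 → PMF 𝒴)
    (x : Fin n → 𝒳) : PMF (Multiset 𝒴) :=
  (indep n fun i => R (x i)).map fun l => (l : Multiset 𝒴)

/-- `(ε, δ)`-differential privacy of a local randomizer (any two inputs are neighbors). -/
def RandDP {𝒳 : Type u} {𝒴 : Type v} (R : 𝒳 → PMF 𝒴) (ε δ : ℝ) : Prop :=
  ∀ x x' : 𝒳, ∀ T : Set 𝒴,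
    (R x).toOuterMeasure T ≤
      ENNReal.ofReal (Real.exp ε) * (R x').toOuterMeasure T + ENNReal.ofReal δ

/-- The output of the local protocol `(R, A)`. -/
noncomputable def localOut {𝒳 : Type u} {𝒴 : Type v} {𝒵 : Type w} (n : ℕ)
    (R : 𝒳 → PMF 𝒴) (A : List 𝒴 → 𝒵) (X : Fin n → 𝒳) : PMF 𝒵 :=
  (indep n fun i => R (X i)).map A

/-- `(a, b)`-accuracy of a protocol `P` for a function `f` w.r.t. a distance `d`. -/
def AccFor {I : Type u} {𝒵 : Type w} (P : I → PMF 𝒵) (f : I → 𝒵) (d : 𝒵 → 𝒵 → ℝ)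
    (a b : ℝ) : Prop :=
  ∀ X, ENNReal.ofReal (1 - b) ≤ (P X).toOuterMeasure {z | d z (f X) ≤ a}

/-!
`Pr[B = k+1] / Pr[B = k] = (h - k) / (k + 1)`, so it suffices to show `h - k ≤ (1 + t) (k + 1)`.
With `L = log (4/δ)`, `s = √(h L / 2)` and `t = √(32 L / h)` one has `t h = 8 s` and `t s = 4 L`;
for `k > h/2 - s` the bound then reduces to `2 L ≤ s`, i.e. to `8 L ≤ h`.
-/

theorem binom_apply (p : ℝ≥0∞) (hp : p ≤ 1) (n k : ℕ) :
    binom p hp n k = p ^ k * (1 - p) ^ (n - k) * n.choose k := by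
  have hp' : (p.toNNReal : ℝ≥0∞) = p :=
    ENNReal.coe_toNNReal (ne_top_of_le_ne_top ENNReal.one_ne_top hp)
  rw [binom, PMF.map_apply, tsum_fintype]
  rcases le_or_gt k n with hkn | hnk
  · rw [Finset.sum_eq_single_of_mem (⟨k, Nat.lt_succ_of_le hkn⟩ : Fin (n + 1)) (Finset.mem_univ _)]
    · rw [if_pos rfl]
      erw [PMF.binomial_apply]
      push_cast [hp']
      rfl
    · intro i _ hi
      exact if_neg fun hki => hi (Fin.ext hki.symm)
  · rw [Nat.choose_eq_zero_of_lt hnk, Nat.cast_zero, mul_zero]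
    exact Finset.sum_eq_zero fun i _ => if_neg (by omega)

theorem binom_half_apply (n k : ℕ) :
    binom 2⁻¹ half_le_one n k = 2⁻¹ ^ n * n.choose k := by
  rw [binom_apply, ENNReal.one_sub_inv_two]
  rcases le_or_gt k n with hkn | hnk
  · rw [← pow_add, Nat.add_sub_cancel' hkn]
  · simp [Nat.choose_eq_zero_of_lt hnk]

theorem binom_half_succ_mul (n k : ℕ) :
    binom 2⁻¹ half_le_one n (k + 1) * (k + 1) = binom 2⁻¹ half_le_one n k * (n - k : ℕ) := by
  have hchoose : (n.choose (k + 1) * (k + 1) : ℝ≥0∞) = n.choose k * (n - k : ℕ) := by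
    exact_mod_cast Nat.choose_succ_right_eq n k
  rw [binom_half_apply, binom_half_apply, mul_assoc, hchoose, mul_assoc]

theorem two_mul_sqrt_le_sqrt_mul (n L : ℝ) (hn : 0 ≤ n) (hL : 8 * L < n) :
    2 * √(n / 2 * L) ≤ √(32 * L / n) * (n / 2 - √(n / 2 * L)) := by
  rcases le_or_gt L 0 with hL0 | hL0
  · rw [Real.sqrt_eq_zero'.2 (mul_nonpos_of_nonneg_of_nonpos (by positivity) hL0)]
    simp only [mul_zero, sub_zero]
    positivity
  · set s := √(n / 2 * L)
    have hn0 : 0 < n := by linarith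
    have hs_sq : s ^ 2 = n / 2 * L := Real.sq_sqrt (by positivity)
    have ht : √(32 * L / n) = 8 * s / n := by
      rw [show 32 * L / n = (8 * s / n) ^ 2 by field_simp; rw [hs_sq]; ring]
      exact Real.sqrt_sq (by positivity)
    have hs : 2 * L ≤ s := Real.le_sqrt_of_sq_le (by nlinarith)
    have hts : 8 * s / n * (n / 2 - s) = 4 * s - 4 * L := by
      field_simp
      linear_combination (-16) * hs_sq
    rw [ht, hts]
    linarith

theorem sub_le_one_add_sqrt_mul (n L k : ℝ) (hn : 0 ≤ n) (hL : 8 * L < n)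
    (hk : n / 2 - √(n / 2 * L) < k) :
    n - k ≤ (1 + √(32 * L / n)) * (k + 1) := by
  have hkey := two_mul_sqrt_le_sqrt_mul n L hn hL
  have ht : √(32 * L / n) * (n / 2 - √(n / 2 * L)) ≤ √(32 * L / n) * (k + 1) :=
    mul_le_mul_of_nonneg_left (by linarith) (Real.sqrt_nonneg _)
  linarith

theorem stmt2_general (h : ℕ) (del : ℝ)
    (hh : 8 * Real.log (4 / del) < (h : ℝ)) (k : ℕ)
    (hk : (h : ℝ) / 2 - Real.sqrt ((h / 2) * Real.log (4 / del)) < (k : ℝ)) :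
    binom 2⁻¹ half_le_one h (k + 1) ≤
      ENNReal.ofReal (1 + Real.sqrt (32 * Real.log (4 / del) / h)) *
        binom 2⁻¹ half_le_one h k := by
  set t := Real.sqrt (32 * Real.log (4 / del) / h)
  have hreal : ((h - k : ℕ) : ℝ) ≤ (1 + t) * (k + 1) := by
    rcases le_total k h with hkh | hhk
    · rw [Nat.cast_sub hkh]
      exact sub_le_one_add_sqrt_mul _ _ _ h.cast_nonneg hh hk
    · rw [Nat.sub_eq_zero_of_le hhk, Nat.cast_zero]
      positivity
  have hcount : ((h - k : ℕ) : ℝ≥0∞) ≤ ENNReal.ofReal (1 + t) * (k + 1) := by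
    calc ((h - k : ℕ) : ℝ≥0∞)
        = ENNReal.ofReal ((h - k : ℕ) : ℝ) := (ENNReal.ofReal_natCast _).symm
      _ ≤ ENNReal.ofReal ((1 + t) * ((k + 1 : ℕ) : ℝ)) :=
          ENNReal.ofReal_le_ofReal (by exact_mod_cast hreal)
      _ = ENNReal.ofReal (1 + t) * (k + 1) := by
          rw [ENNReal.ofReal_mul (by positivity), ENNReal.ofReal_natCast, Nat.cast_succ]
  refine (ENNReal.mul_le_mul_iff_left (c := k + 1) (by simp) (by simp)).1 ?_
  calc binom 2⁻¹ half_le_one h (k + 1) * (k + 1)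
      = binom 2⁻¹ half_le_one h k * (h - k : ℕ) := binom_half_succ_mul h k
    _ ≤ binom 2⁻¹ half_le_one h k * (ENNReal.ofReal (1 + t) * (k + 1)) := by gcongr
    _ = ENNReal.ofReal (1 + t) * binom 2⁻¹ half_le_one h k * (k + 1) := by ring

/-- for `B ~ Bin(h, 1/2)` with `h > 8 ln(4/δ)` and any integer
`k > h/2 - √((h/2) ln(4/δ))`,
`Pr[B = k+1] ≤ (1 + √(32 ln(4/δ)/h)) Pr[B = k]`. -/
theorem stmt2 (h : ℕ) (del : ℝ) (hdel : del ∈ Set.Ioo (0 : ℝ) 1)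
    (hh : 8 * Real.log (4 / del) < (h : ℝ)) (k : ℕ)
    (hk : (h : ℝ) / 2 - Real.sqrt ((h / 2) * Real.log (4 / del)) < (k : ℝ)) :
    binom 2⁻¹ half_le_one h (k + 1) ≤
      ENNReal.ofReal (1 + Real.sqrt (32 * Real.log (4 / del) / h)) *
        binom 2⁻¹ half_le_one h k :=
  stmt2_general h del hh k hk

end ShuffledDP
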